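/- Let f ∈ G(ℝ) with f ≠ 0, and let (f_ε)_ε be a representative of f. The following are equivalent: (1) f is a zero divisor in G(ℝ), i.e. there exists g ∈ G(ℝ), g ≠ 0, with f·g = 0 in G(ℝ); (2) there exist a compact set K ⊂ ℝ, a net (x_ε)_{ε∈(0,1]} of points of K, a real ρ ≥ 0, and a sequence (ε_n) with ε_n → 0, such that for every k ≥ 0 and every x ∈ [x_{ε_k} − ε_k^ρ, x_{ε_k} + ε_k^ρ] one has |f_{ε_k}(x)| < ε_k^k. -/

import Mathlib

open Set Filter Topology MeasureTheory

noncomputable section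

variable {E F : Type*} [NormedAddCommGroup E] [NormedSpace ℝ E]
  [NormedAddCommGroup F] [NormedSpace ℝ F]

/-- A net of smooth functions, indexed by `ε ∈ (0,1]`, is *moderate* on the open set `Ω`:
all iterated derivatives are `O(ε^{-N})` on compact subsets, for some `N`. -/
def IsModerate (Ω : Set E) (u : ℝ → E → F) : Prop :=
  (∀ ε ∈ Set.Ioc (0:ℝ) 1, ContDiffOn ℝ (⊤:ℕ∞) (u ε) Ω) ∧
  ∀ K : Set E, IsCompact K → K ⊆ Ω → ∀ n : ℕ, ∃ N : ℕ, ∃ C : ℝ, ∃ ε₀ : ℝ, 0 < ε₀ ∧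
    ∀ ε : ℝ, 0 < ε → ε < ε₀ → ∀ x ∈ K,
      ‖iteratedFDerivWithin ℝ n (u ε) Ω x‖ ≤ C * ε ^ (-(N:ℤ))

/-- A net of smooth functions is *negligible* on `Ω`: all iterated derivatives are `O(ε^m)`
on compact subsets, for every `m`. -/
def IsNegligible (Ω : Set E) (u : ℝ → E → F) : Prop :=
  (∀ ε ∈ Set.Ioc (0:ℝ) 1, ContDiffOn ℝ (⊤:ℕ∞) (u ε) Ω) ∧
  ∀ K : Set E, IsCompact K → K ⊆ Ω → ∀ n : ℕ, ∀ m : ℕ, ∃ C : ℝ, ∃ ε₀ : ℝ, 0 < ε₀ ∧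
    ∀ ε : ℝ, 0 < ε → ε < ε₀ → ∀ x ∈ K,
      ‖iteratedFDerivWithin ℝ n (u ε) Ω x‖ ≤ C * ε ^ m

/-- A net of numbers is *moderate*: `O(ε^{-N})` for some `N`. -/
def NumModerate (c : ℝ → F) : Prop :=
  ∃ N : ℕ, ∃ C : ℝ, ∃ ε₀ : ℝ, 0 < ε₀ ∧ ∀ ε : ℝ, 0 < ε → ε < ε₀ → ‖c ε‖ ≤ C * ε ^ (-(N:ℤ))

/-- A net of numbers is *negligible*: `O(ε^m)` for every `m`. -/
def NumNegligible (c : ℝ → F) : Prop :=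
  ∀ m : ℕ, ∃ C : ℝ, ∃ ε₀ : ℝ, 0 < ε₀ ∧ ∀ ε : ℝ, 0 < ε → ε < ε₀ → ‖c ε‖ ≤ C * ε ^ m

/-- A net of points is a representative of a *compactly supported generalized point* of `Ω`. -/
def CompactlySupportedPoint (Ω : Set E) (a : ℝ → E) : Prop :=
  ∃ K : Set E, IsCompact K ∧ K ⊆ Ω ∧ ∃ ε₀ : ℝ, 0 < ε₀ ∧ ∀ ε : ℝ, 0 < ε → ε < ε₀ → a ε ∈ K

/-- The partial order on generalized reals, on representatives: `a ≤ b` iff `b - a` has a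
representative with all terms nonnegative, i.e. `a ε + n ε ≤ b ε` for some negligible `n`. -/
def TildeLe (a b : ℝ → ℝ) : Prop :=
  ∃ n : ℝ → ℝ, NumNegligible n ∧ ∀ ε ∈ Set.Ioc (0:ℝ) 1, a ε + n ε ≤ b ε

/-- Strict order `a << b`: `b - a` is strictly positive, i.e. `b ε - a ε > ε^m` for some `m`
and all small `ε`. -/
def TildeLt (a b : ℝ → ℝ) : Prop :=
  ∃ m : ℕ, ∃ ε₀ : ℝ, 0 < ε₀ ∧ ∀ ε : ℝ, 0 < ε → ε < ε₀ → a ε + ε ^ m < b ε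


/-!
If `g` is moderate but not negligible, Landau's inequality `‖φ'‖ ≤ 2A/L + BL`, applied on
intervals of length `L = ε^ℓ`, shows that `g` is already not negligible at order zero: along
some `ε → 0` it exceeds `ε^m` at a point `x_ε` of a fixed compact set. Since `g'_ε` is
moderate, `|g_ε| ≥ ε^m / 2` on `[x_ε - ε^ρ, x_ε + ε^ρ]`, and there `f_ε g_ε ≈ 0` forces
`|f_ε|` below every power of `ε`.

Conversely, let `g_ε` be a bump of width `ε^R`, `R > ρ`, centred at `x_ε` when `ε` is one of
the `ε_k`, and `0` otherwise. It is moderate, and not negligible since `g_{ε_k}(x_{ε_k}) = 1`.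
The same Landau bootstrap, run on balls whose radius halves with each derivative, shows that
all derivatives of `f_{ε_k}` are small on the support of `g_{ε_k}`, so `f g` is negligible by
the Leibniz rule.
-/
open Metric
open scoped ContDiff

theorem eventually_nhdsGT_zero_iff {P : ℝ → Prop} :
    (∀ᶠ ε in 𝓝[>] 0, P ε) ↔ ∃ ε₀ : ℝ, 0 < ε₀ ∧ ∀ ε : ℝ, 0 < ε → ε < ε₀ → P ε := by
  simp only [(nhdsGT_basis (0 : ℝ)).eventually_iff, mem_Ioo, and_imp]

theorem isModerate_univ_iff {u : ℝ → ℝ → F} :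
    IsModerate univ u ↔ (∀ ε ∈ Ioc (0 : ℝ) 1, ContDiff ℝ ∞ (u ε)) ∧
      ∀ K : Set ℝ, IsCompact K → ∀ n : ℕ, ∃ N : ℕ, ∃ C : ℝ,
        ∀ᶠ ε in 𝓝[>] 0, ∀ x ∈ K, ‖iteratedDeriv n (u ε) x‖ ≤ C * (ε ^ N)⁻¹ := by
  simp only [IsModerate, contDiffOn_univ, iteratedFDerivWithin_univ,
    norm_iteratedFDeriv_eq_norm_iteratedDeriv, eventually_nhdsGT_zero_iff, subset_univ,
    true_implies, zpow_neg, zpow_natCast]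

theorem isNegligible_univ_iff {u : ℝ → ℝ → F} :
    IsNegligible univ u ↔ (∀ ε ∈ Ioc (0 : ℝ) 1, ContDiff ℝ ∞ (u ε)) ∧
      ∀ K : Set ℝ, IsCompact K → ∀ n m : ℕ, ∃ C : ℝ,
        ∀ᶠ ε in 𝓝[>] 0, ∀ x ∈ K, ‖iteratedDeriv n (u ε) x‖ ≤ C * ε ^ m := by
  simp only [IsNegligible, contDiffOn_univ, iteratedFDerivWithin_univ,
    norm_iteratedFDeriv_eq_norm_iteratedDeriv, eventually_nhdsGT_zero_iff, subset_univ,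
    true_implies]

theorem eventually_contDiff_of_forall_Ioc {u : ℝ → ℝ → F}
    (hu : ∀ ε ∈ Ioc (0 : ℝ) 1, ContDiff ℝ ∞ (u ε)) : ∀ᶠ ε in 𝓝[>] 0, ContDiff ℝ ∞ (u ε) :=
  eventually_of_mem (Ioc_mem_nhdsGT one_pos) hu

theorem eventually_mul_lt_one (C : ℝ) : ∀ᶠ ε in 𝓝[>] (0 : ℝ), C * ε < 1 :=
  (((continuous_const_mul C).tendsto' 0 0 (mul_zero C)).mono_left nhdsWithin_le_nhds).eventually
    (gt_mem_nhds one_pos)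

section DerivativeEstimates

variable {φ : ℝ → F}

-- Landau's inequality, obtained by comparing `φ` with its tangent line at `a`.
theorem norm_deriv_le_of_norm_le_of_norm_deriv_deriv_le (hφ : Differentiable ℝ φ)
    (hφ' : Differentiable ℝ (deriv φ)) {a L A B : ℝ} (hL : 0 < L)
    (hA : ∀ y ∈ Icc a (a + L), ‖φ y‖ ≤ A) (hB : ∀ y ∈ Icc a (a + L), ‖deriv (deriv φ) y‖ ≤ B) :
    ‖deriv φ a‖ ≤ 2 * A / L + B * L := by
  have ha : a ∈ Icc a (a + L) := left_mem_Icc.2 (by linarith)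
  have haL : a + L ∈ Icc a (a + L) := right_mem_Icc.2 (by linarith)
  have hderiv_sub : ∀ t ∈ Icc a (a + L), ‖deriv φ t - deriv φ a‖ ≤ B * L := by
    intro t ht
    calc ‖deriv φ t - deriv φ a‖ ≤ B * ‖t - a‖ :=
          (convex_Icc a (a + L)).norm_image_sub_le_of_norm_deriv_le (fun x _ => hφ' x) hB ha ht
      _ ≤ B * L := by
          gcongr
          · exact (norm_nonneg _).trans (hB a ha)
          · rw [Real.norm_eq_abs, abs_le]; constructor <;> linarith [ht.1, ht.2]
  set G : ℝ → F := fun t => φ t - (t - a) • deriv φ a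
  have hG : ∀ t, HasDerivAt G (deriv φ t - deriv φ a) t := fun t => by
    have h := (hφ t).hasDerivAt.sub (((hasDerivAt_id t).sub_const a).smul_const (deriv φ a))
    rwa [one_smul] at h
  have hG_sub : ‖G (a + L) - G a‖ ≤ B * L * L := by
    have := (convex_Icc a (a + L)).norm_image_sub_le_of_norm_deriv_le
      (fun x _ => (hG x).differentiableAt) (fun x hx => (hG x).deriv ▸ hderiv_sub x hx) ha haL
    rwa [add_sub_cancel_left, Real.norm_eq_abs, abs_of_pos hL] at this
  have hsplit : L • deriv φ a = (φ (a + L) - φ a) - (G (a + L) - G a) := by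
    simp only [G, add_sub_cancel_left, sub_self, zero_smul, sub_zero]; abel
  have key : L * ‖deriv φ a‖ ≤ 2 * A + B * L * L := by
    calc L * ‖deriv φ a‖ = ‖L • deriv φ a‖ := by rw [norm_smul, Real.norm_eq_abs, abs_of_pos hL]
      _ ≤ ‖φ (a + L)‖ + ‖φ a‖ + ‖G (a + L) - G a‖ := by
          rw [hsplit]; exact (norm_sub_le _ _).trans (by gcongr; exact norm_sub_le _ _)
      _ ≤ 2 * A + B * L * L := by linarith [hA _ haL, hA a ha]
  rw [div_add' _ _ _ hL.ne', le_div_iff₀ hL, mul_comm]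
  exact key

theorem norm_deriv_le_of_mem_closedBall (hφ : Differentiable ℝ φ)
    (hφ' : Differentiable ℝ (deriv φ)) {c r L A B : ℝ} (hL : 0 < L)
    (hA : ∀ y ∈ closedBall c (r + L), ‖φ y‖ ≤ A)
    (hB : ∀ y ∈ closedBall c (r + L), ‖deriv (deriv φ) y‖ ≤ B) {y : ℝ} (hy : y ∈ closedBall c r) :
    ‖deriv φ y‖ ≤ 2 * A / L + B * L := by
  have hsub : Icc y (y + L) ⊆ closedBall c (r + L) := by
    rw [Real.closedBall_eq_Icc] at hy ⊢
    exact Icc_subset_Icc (by linarith [hy.1]) (by linarith [hy.2])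
  exact norm_deriv_le_of_norm_le_of_norm_deriv_deriv_le hφ hφ' hL
    (fun z hz => hA z (hsub hz)) (fun z hz => hB z (hsub hz))

end DerivativeEstimates

theorem norm_iteratedDeriv_succ_le {φ : ℝ → F} {j t N ℓ : ℕ} (hφ : ContDiff ℝ (j + 2) φ)
    {ε ρ c r C₁ C₂ : ℝ} (hε : 0 < ε) (hεj : ε ≤ (1 / 2) ^ (j + 1)) (hr : ε ^ ρ ≤ r)
    (hC₂ : 0 ≤ C₂) (hℓρ : ρ + 1 ≤ ℓ) (hℓN : N + t ≤ ℓ)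
    (h₀ : ∀ z ∈ closedBall c (r / 2 ^ j), ‖iteratedDeriv j φ z‖ ≤ C₁ * ε ^ (t + ℓ))
    (h₂ : ∀ z ∈ closedBall c (r / 2 ^ j), ‖iteratedDeriv (j + 2) φ z‖ ≤ C₂ * (ε ^ N)⁻¹) :
    ∀ y ∈ closedBall c (r / 2 ^ (j + 1)), ‖iteratedDeriv (j + 1) φ y‖ ≤ (2 * C₁ + C₂) * ε ^ t := by
  intro y hy
  have hε1 : ε ≤ 1 := hεj.trans (pow_le_one₀ (by norm_num) (by norm_num))
  have hr0 : 0 < r := (Real.rpow_pos_of_pos hε ρ).trans_le hr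
  have hL : ε ^ ℓ ≤ r / 2 ^ (j + 1) := by
    calc ε ^ ℓ ≤ ε ^ (ρ + 1) := by
          rw [← Real.rpow_natCast]
          exact Real.rpow_le_rpow_of_exponent_ge hε hε1 hℓρ
      _ = ε ^ ρ * ε := by rw [Real.rpow_add hε, Real.rpow_one]
      _ ≤ r * (1 / 2) ^ (j + 1) := by gcongr
      _ = r / 2 ^ (j + 1) := by rw [one_div_pow, mul_one_div]
  have hhalf : r / 2 ^ (j + 1) + r / 2 ^ (j + 1) = r / 2 ^ j := by rw [pow_succ]; ring
  have hsub : closedBall c (r / 2 ^ (j + 1) + ε ^ ℓ) ⊆ closedBall c (r / 2 ^ j) :=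
    closedBall_subset_closedBall (by linarith)
  rw [iteratedDeriv_succ]
  refine (norm_deriv_le_of_mem_closedBall
    (hφ.differentiable_iteratedDeriv j (by exact_mod_cast (by omega : j < j + 2)))
    (by rw [← iteratedDeriv_succ]
        exact hφ.differentiable_iteratedDeriv (j + 1)
          (by exact_mod_cast (by omega : j + 1 < j + 2)))
    (pow_pos hε ℓ) (fun z hz => h₀ z (hsub hz))
    (fun z hz => by rw [← iteratedDeriv_succ, ← iteratedDeriv_succ]; exact h₂ z (hsub hz))
    hy).trans ?_
  obtain ⟨d, rfl⟩ : ∃ d, ℓ = N + t + d := ⟨ℓ - (N + t), by omega⟩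
  have hcancel : C₂ * (ε ^ N)⁻¹ * ε ^ (N + t + d) = C₂ * ε ^ t * ε ^ d := by
    field_simp; ring
  rw [pow_add ε t, mul_div_assoc, mul_div_assoc, mul_div_cancel_right₀ _ (pow_pos hε _).ne',
    hcancel]
  linarith [mul_le_of_le_one_right (mul_nonneg hC₂ (pow_nonneg hε.le t))
    (pow_le_one₀ (n := d) hε.le hε1)]

theorem exists_eventually_norm_iteratedDeriv_le {u : ℝ → ℝ → F} {S : Set ℝ}
    (hsm : ∀ᶠ ε in 𝓝[>] 0, ContDiff ℝ ∞ (u ε))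
    (hmod : ∀ n : ℕ, ∃ N : ℕ, ∃ C : ℝ,
      ∀ᶠ ε in 𝓝[>] 0, ∀ y ∈ S, ‖iteratedDeriv n (u ε) y‖ ≤ C * (ε ^ N)⁻¹)
    (ρ : ℝ) (j t : ℕ) :
    ∃ M : ℕ, ∃ C : ℝ, 0 ≤ C ∧ ∀ᶠ ε in 𝓝[>] 0, ∀ c r : ℝ, ε ^ ρ ≤ r → closedBall c r ⊆ S →
      (∀ y ∈ closedBall c r, ‖u ε y‖ ≤ ε ^ M) →
      ∀ i ≤ j, ∀ y ∈ closedBall c (r / 2 ^ j), ‖iteratedDeriv i (u ε) y‖ ≤ C * ε ^ t := by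
  induction j generalizing t with
  | zero =>
    refine ⟨t, 1, zero_le_one, Eventually.of_forall fun ε c r _ _ hsmall i hi y hy => ?_⟩
    obtain rfl : i = 0 := Nat.le_zero.1 hi
    simpa using hsmall y (by simpa using hy)
  | succ j ih =>
    obtain ⟨N, C₂, hC₂⟩ := hmod (j + 2)
    set ℓ := N + t + (⌈ρ⌉₊ + 1)
    obtain ⟨M, C₁, hC₁, hM⟩ := ih (t + ℓ)
    refine ⟨M, 2 * C₁ + max C₂ 0, by positivity, ?_⟩
    filter_upwards [hsm, hM, hC₂, Ioc_mem_nhdsGT (by positivity : (0 : ℝ) < (1 / 2) ^ (j + 1))]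
      with ε hsmε hMε hC₂ε ⟨hε, hεj⟩ c r hr hrS hsmall i hi y hy
    have hε1 : ε ≤ 1 := hεj.trans (pow_le_one₀ (by norm_num) (by norm_num))
    have hr0 : 0 < r := (Real.rpow_pos_of_pos hε ρ).trans_le hr
    have hball : closedBall c (r / 2 ^ (j + 1)) ⊆ closedBall c (r / 2 ^ j) :=
      closedBall_subset_closedBall (div_le_div_of_nonneg_left hr0.le (by positivity)
        (pow_le_pow_right₀ one_le_two j.le_succ))
    have hsubS : closedBall c (r / 2 ^ j) ⊆ S :=
      (closedBall_subset_closedBall (div_le_self hr0.le (one_le_pow₀ one_le_two))).trans hrS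
    rcases Nat.lt_succ_iff_lt_or_eq.1 (Nat.lt_succ_of_le hi) with hij | rfl
    · calc ‖iteratedDeriv i (u ε) y‖ ≤ C₁ * ε ^ (t + ℓ) :=
            hMε c r hr hrS hsmall i (Nat.lt_succ_iff.1 hij) y (hball hy)
        _ ≤ (2 * C₁ + max C₂ 0) * ε ^ t := by
            have : ε ^ (t + ℓ) ≤ ε ^ t := pow_le_pow_of_le_one hε.le hε1 (by omega)
            nlinarith [le_max_right C₂ 0, pow_nonneg hε.le t, pow_nonneg hε.le (t + ℓ)]
    · exact norm_iteratedDeriv_succ_le (N := N) (ℓ := ℓ) (hsmε.of_le (WithTop.coe_le_coe.2 le_top))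
        hε hεj hr (le_max_right _ _) (by push_cast [ℓ]; linarith [Nat.le_ceil ρ]) (by omega)
        (hMε c r hr hrS hsmall j le_rfl)
        (fun z hz => (hC₂ε z (hsubS hz)).trans (by gcongr; exact le_max_left _ _)) y hy

theorem IsModerate.isNegligible_of_norm_le {u : ℝ → ℝ → F} (hu : IsModerate univ u)
    (h0 : ∀ K : Set ℝ, IsCompact K → ∀ m : ℕ, ∀ᶠ ε in 𝓝[>] 0, ∀ x ∈ K, ‖u ε x‖ ≤ ε ^ m) :
    IsNegligible univ u := by
  obtain ⟨hsm, hmod⟩ := isModerate_univ_iff.1 hu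
  refine isNegligible_univ_iff.2 ⟨hsm, fun K hK n m => ?_⟩
  obtain ⟨R, hKR⟩ := hK.isBounded.subset_closedBall 0
  set S := closedBall (0 : ℝ) (2 ^ n * max R 1)
  obtain ⟨M, C, -, hC⟩ := exists_eventually_norm_iteratedDeriv_le
    (eventually_contDiff_of_forall_Ioc hsm) (fun i => hmod S (isCompact_closedBall _ _) i) 0 n m
  refine ⟨C, ?_⟩
  filter_upwards [hC, h0 S (isCompact_closedBall _ _) M] with ε hCε h0ε x hx
  refine hCε 0 (2 ^ n * max R 1) ?_ subset_rfl h0ε n le_rfl x ?_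
  · rw [Real.rpow_zero]
    exact one_le_mul_of_one_le_of_one_le (one_le_pow₀ one_le_two) (le_max_right _ _)
  · rw [mul_div_cancel_left₀ _ (by positivity)]
    exact closedBall_subset_closedBall (le_max_left _ _) (hKR hx)

theorem IsModerate.exists_frequently_pow_lt_norm {u : ℝ → ℝ → F} (hu : IsModerate univ u)
    (hne : ¬IsNegligible univ u) :
    ∃ K : Set ℝ, IsCompact K ∧ ∃ m : ℕ, ∃ᶠ ε in 𝓝[>] 0, ∃ x ∈ K, ε ^ m < ‖u ε x‖ := by
  contrapose! hne
  exact hu.isNegligible_of_norm_le fun K hK m => by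
    simpa only [not_frequently, not_exists, not_and, not_lt] using hne K hK m

theorem IsModerate.exists_eventually_half_le_norm {u : ℝ → ℝ → F} (hu : IsModerate univ u)
    {K : Set ℝ} (hK : IsCompact K) (m : ℕ) :
    ∃ ρ : ℕ, ∀ᶠ ε in 𝓝[>] 0, ∀ x ∈ K, ε ^ m < ‖u ε x‖ →
      ∀ y ∈ closedBall x (ε ^ ρ), ε ^ m / 2 ≤ ‖u ε y‖ := by
  obtain ⟨hsm, hmod⟩ := isModerate_univ_iff.1 hu
  obtain ⟨N, C, hC⟩ := hmod _ (hK.cthickening (r := 1)) 1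
  refine ⟨m + N + 1, ?_⟩
  filter_upwards [eventually_contDiff_of_forall_Ioc hsm, hC, Ioc_mem_nhdsGT one_pos,
    eventually_mul_lt_one (2 * max C 0)] with ε hsmε hCε ⟨hε, hε1⟩ hCε1 x hx hlt y hy
  have hball : closedBall x (ε ^ (m + N + 1)) ⊆ cthickening 1 K :=
    (closedBall_subset_closedBall (pow_le_one₀ hε.le hε1)).trans
      (closedBall_subset_cthickening hx 1)
  have hdiff : ‖u ε y - u ε x‖ ≤ max C 0 * (ε ^ N)⁻¹ * ε ^ (m + N + 1) := by
    refine ((convex_closedBall x _).norm_image_sub_le_of_norm_deriv_le (C := max C 0 * (ε ^ N)⁻¹)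
      (fun z _ => (hsmε.differentiable (by simp)).differentiableAt) (fun z hz => ?_)
      (mem_closedBall_self (by positivity)) hy).trans ?_
    · rw [← iteratedDeriv_one]
      exact (hCε z (hball hz)).trans (by gcongr; exact le_max_left _ _)
    · exact mul_le_mul_of_nonneg_left (by rw [← dist_eq_norm]; exact hy) (by positivity)
  have hsmall : max C 0 * (ε ^ N)⁻¹ * ε ^ (m + N + 1) ≤ ε ^ m / 2 := by
    have : max C 0 * (ε ^ N)⁻¹ * ε ^ (m + N + 1) = max C 0 * ε * ε ^ m := by
      field_simp; ring
    rw [this]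
    nlinarith [pow_pos hε m]
  linarith [norm_sub_norm_le (u ε x) (u ε y), norm_sub_rev (u ε x) (u ε y)]

theorem frequently_exists_norm_lt_on_closedBall {f g : ℝ → ℝ → ℂ} (hg : IsModerate univ g)
    (hg' : ¬IsNegligible univ g) (hfg : IsNegligible univ fun ε x => f ε x * g ε x) :
    ∃ K : Set ℝ, IsCompact K ∧ ∃ ρ : ℕ, ∀ k : ℕ,
      ∃ᶠ ε in 𝓝[>] 0, ∃ x ∈ K, ∀ y ∈ closedBall x (ε ^ ρ), ‖f ε y‖ < ε ^ k := by
  obtain ⟨K, hK, m, hfreq⟩ := hg.exists_frequently_pow_lt_norm hg'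
  obtain ⟨ρ, hρ⟩ := hg.exists_eventually_half_le_norm hK m
  refine ⟨K, hK, ρ, fun k => ?_⟩
  obtain ⟨C, hC⟩ := (isNegligible_univ_iff.1 hfg).2 _ (hK.cthickening (r := 1)) 0 (k + m + 1)
  have hev : ∀ᶠ ε in 𝓝[>] 0, ∀ x ∈ K, ε ^ m < ‖g ε x‖ →
      ∀ y ∈ closedBall x (ε ^ ρ), ‖f ε y‖ < ε ^ k := by
    filter_upwards [hρ, hC, Ioc_mem_nhdsGT one_pos, eventually_mul_lt_one (2 * C)]
      with ε hρε hCε ⟨hε, hε1⟩ hCε1 x hx hlt y hy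
    have hy' : y ∈ cthickening 1 K := closedBall_subset_cthickening hx 1
      (closedBall_subset_closedBall (pow_le_one₀ hε.le hε1) hy)
    have hfgy : ‖f ε y‖ * ‖g ε y‖ ≤ C * ε ^ (k + m + 1) := by
      simpa [norm_mul] using hCε y hy'
    have hf : ‖f ε y‖ * (ε ^ m / 2) ≤ (2 * C * ε) * ε ^ k * (ε ^ m / 2) := by
      calc ‖f ε y‖ * (ε ^ m / 2) ≤ ‖f ε y‖ * ‖g ε y‖ := by gcongr; exact hρε x hx hlt y hy
        _ ≤ C * ε ^ (k + m + 1) := hfgy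
        _ = (2 * C * ε) * ε ^ k * (ε ^ m / 2) := by ring
    calc ‖f ε y‖ ≤ (2 * C * ε) * ε ^ k := le_of_mul_le_mul_right hf (by positivity)
      _ < ε ^ k := mul_lt_of_lt_one_left (pow_pos hε k) hCε1
  exact (hfreq.and_eventually hev).mono fun ε ⟨⟨x, hx, hlt⟩, h⟩ => ⟨x, hx, h x hx hlt⟩

theorem exists_seq_strictAnti_of_frequently {P : ℕ → ℝ → Prop}
    (h : ∀ k, ∃ᶠ ε in 𝓝[>] 0, P k ε) :
    ∃ e : ℕ → ℝ, StrictAnti e ∧ (∀ k, e k ∈ Ioc 0 1) ∧ Tendsto e atTop (𝓝 0) ∧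
      ∀ k, P k (e k) := by
  have step : ∀ (k : ℕ) (p : Ioi (0 : ℝ)),
      ∃ ε : Ioi (0 : ℝ), ε.1 < min p.1 (1 / (k + 1)) ∧ P k ε :=
    fun k p => by
      obtain ⟨ε, hP, hε⟩ :=
        ((h k).and_eventually (Ioo_mem_nhdsGT (lt_min p.2 Nat.one_div_pos_of_nat))).exists
      exact ⟨⟨ε, hε.1⟩, hε.2, hP⟩
  choose next hnext using step
  let s : ℕ → Ioi (0 : ℝ) := fun n =>
    Nat.rec (next 0 ⟨1, mem_Ioi.2 one_pos⟩) (fun k sk => next (k + 1) sk) n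
  have hs : ∀ k, ∃ p, s k = next k p := fun k => by cases k <;> exact ⟨_, rfl⟩
  have hlt : ∀ k : ℕ, (s k).1 < 1 / (k + 1) ∧ P k (s k).1 := fun k => by
    obtain ⟨p, hp⟩ := hs k
    rw [hp]
    exact ⟨(hnext k p).1.trans_le (min_le_right _ _), (hnext k p).2⟩
  refine ⟨fun k => (s k).1, strictAnti_nat_of_succ_lt fun k => ?_, fun k => ⟨(s k).2, ?_⟩, ?_,
    fun k => (hlt k).2⟩
  · exact (hnext (k + 1) (s k)).1.trans_le (min_le_left _ _)
  · exact (hlt k).1.le.trans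
      (div_le_one_of_le₀ (by linarith [k.cast_nonneg (α := ℝ)]) (by positivity))
  · exact squeeze_zero (fun k => (s k).2.le) (fun k => (hlt k).1.le)
      tendsto_one_div_add_atTop_nhds_zero_nat

theorem exists_flat_intervals_of_isNegligible_mul {f g : ℝ → ℝ → ℂ} (hg : IsModerate univ g)
    (hg' : ¬IsNegligible univ g) (hfg : IsNegligible univ fun ε x => f ε x * g ε x) :
    ∃ K : Set ℝ, IsCompact K ∧
      ∃ x : ℝ → ℝ, (∀ ε ∈ Ioc (0 : ℝ) 1, x ε ∈ K) ∧
      ∃ ρ : ℝ, 0 ≤ ρ ∧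
      ∃ e : ℕ → ℝ, (∀ n : ℕ, e n ∈ Ioc (0 : ℝ) 1) ∧ Tendsto e atTop (𝓝 0) ∧
        ∀ k : ℕ, ∀ y ∈ Icc (x (e k) - e k ^ ρ) (x (e k) + e k ^ ρ), ‖f (e k) y‖ < e k ^ k := by
  obtain ⟨K, hK, ρ, hfreq⟩ := frequently_exists_norm_lt_on_closedBall hg hg' hfg
  obtain ⟨e, he_anti, he_mem, he_lim, hP⟩ := exists_seq_strictAnti_of_frequently hfreq
  choose c hcK hc using hP
  refine ⟨K, hK, Function.extend e c fun _ => c 0, fun ε _ => ?_, ρ, Nat.cast_nonneg ρ, e, he_mem,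
    he_lim, fun k y hy => hc k y ?_⟩
  · classical
    rw [Function.extend_def]; split_ifs <;> exact hcK _
  · rwa [he_anti.injective.extend_apply, Real.rpow_natCast, ← Real.closedBall_eq_Icc] at hy

theorem norm_iteratedDeriv_mul_le_of_tsupport_subset {𝔸 : Type*} [NormedRing 𝔸]
    [NormedAlgebra ℝ 𝔸] {φ ψ : ℝ → 𝔸} {n : ℕ} (hφ : ContDiff ℝ n φ) (hψ : ContDiff ℝ n ψ)
    {c s A B : ℝ} (hs : 0 ≤ s) (hsupp : tsupport ψ ⊆ closedBall c s)
    (hA : ∀ i ≤ n, ∀ y ∈ closedBall c s, ‖iteratedDeriv i φ y‖ ≤ A)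
    (hB : ∀ i ≤ n, ∀ y, ‖iteratedDeriv i ψ y‖ ≤ B) (x : ℝ) :
    ‖iteratedDeriv n (fun y => φ y * ψ y) x‖ ≤ 2 ^ n * (A * B) := by
  have hA0 : 0 ≤ A := (norm_nonneg _).trans (hA 0 n.zero_le c (mem_closedBall_self hs))
  have hB0 : 0 ≤ B := (norm_nonneg _).trans (hB 0 n.zero_le x)
  have hterm : ∀ i ∈ Finset.range (n + 1),
      (n.choose i : ℝ) * ‖iteratedFDeriv ℝ i φ x‖ * ‖iteratedFDeriv ℝ (n - i) ψ x‖ ≤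
        n.choose i * (A * B) := by
    intro i hi
    rw [mul_assoc]
    refine mul_le_mul_of_nonneg_left ?_ (Nat.cast_nonneg _)
    by_cases hx : x ∈ closedBall c s
    · simp only [norm_iteratedFDeriv_eq_norm_iteratedDeriv]
      exact mul_le_mul (hA i (Finset.mem_range_succ_iff.1 hi) x hx) (hB _ (n.sub_le i) x)
        (norm_nonneg _) hA0
    · rw [Function.notMem_support.1 fun h => hx (hsupp (support_iteratedFDeriv_subset _ h)),
        norm_zero, mul_zero]
      exact mul_nonneg hA0 hB0
  rw [← norm_iteratedFDeriv_eq_norm_iteratedDeriv]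
  refine (norm_iteratedFDeriv_mul_le hφ hψ x le_rfl).trans ((Finset.sum_le_sum hterm).trans ?_)
  rw [← Finset.sum_mul, ← Nat.cast_sum, Nat.sum_range_choose, Nat.cast_pow, Nat.cast_ofNat]

theorem HasCompactSupport.exists_norm_iteratedDeriv_le {φ : ℝ → F} (hcs : HasCompactSupport φ)
    {n : ℕ} (hφ : ContDiff ℝ n φ) : ∃ C : ℝ, ∀ i ≤ n, ∀ z, ‖iteratedDeriv i φ z‖ ≤ C := by
  have h : ∀ i ≤ n, ∀ᶠ C in atTop, ∀ z, ‖iteratedDeriv i φ z‖ ≤ C := fun i hi => by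
    obtain ⟨C, hC⟩ := (hφ.continuous_iteratedFDeriv (m := i) (mod_cast hi)
      ).bounded_above_of_compact_support (hcs.iteratedFDeriv i)
    filter_upwards [eventually_ge_atTop C] with C' hC' z
    rw [← norm_iteratedFDeriv_eq_norm_iteratedDeriv]
    exact (hC z).trans hC'
  simpa only [Finset.mem_range_succ_iff] using
    ((Finset.range (n + 1)).eventually_all.2 fun i hi =>
      h i (Finset.mem_range_succ_iff.1 hi)).exists

def unitBump : ContDiffBump (0 : ℝ) := ⟨1, 2, one_pos, one_lt_two⟩

def complexBump : ℝ → ℂ := fun y => (unitBump y : ℂ)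

theorem contDiff_complexBump : ContDiff ℝ ∞ complexBump :=
  Complex.ofRealCLM.contDiff.comp unitBump.contDiff

theorem complexBump_zero : complexBump 0 = 1 := by
  simp [complexBump, unitBump.one_of_mem_closedBall (mem_closedBall_self zero_le_one)]

theorem hasCompactSupport_complexBump : HasCompactSupport complexBump :=
  unitBump.hasCompactSupport.comp_left Complex.ofReal_zero

theorem tsupport_complexBump : tsupport complexBump ⊆ closedBall 0 2 := by
  refine closure_minimal (fun y hy => ?_) isClosed_closedBall
  by_contra h
  exact hy (by simp [complexBump, unitBump.zero_of_le_dist (not_le.1 h).le])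

def scaledBump (a s : ℝ) : ℝ → ℂ := fun y => complexBump (s⁻¹ * (y - a))

theorem contDiff_scaledBump (a s : ℝ) : ContDiff ℝ ∞ (scaledBump a s) :=
  contDiff_complexBump.comp (contDiff_const.mul (contDiff_id.sub contDiff_const))

theorem scaledBump_self (a s : ℝ) : scaledBump a s a = 1 := by
  simp [scaledBump, complexBump_zero]

theorem tsupport_scaledBump {s : ℝ} (a : ℝ) (hs : 0 < s) :
    tsupport (scaledBump a s) ⊆ closedBall a (2 * s) := by
  refine closure_minimal (fun y hy => ?_) isClosed_closedBall
  have := tsupport_complexBump (subset_tsupport _ hy)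
  rw [mem_closedBall, dist_zero_right, norm_mul, norm_inv, Real.norm_of_nonneg hs.le,
    inv_mul_le_iff₀ hs, ← dist_eq_norm] at this
  rwa [mem_closedBall, mul_comm]

theorem iteratedDeriv_scaledBump (n : ℕ) (a s : ℝ) :
    iteratedDeriv n (scaledBump a s) =
      fun y => s⁻¹ ^ n • iteratedDeriv n complexBump (s⁻¹ * (y - a)) := by
  have hshift : ContDiff ℝ n fun w => complexBump (w - s⁻¹ * a) :=
    (contDiff_complexBump.comp (contDiff_id.sub contDiff_const)).of_le (mod_cast le_top)
  have h := iteratedDeriv_comp_const_smul hshift s⁻¹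
  simp only [iteratedDeriv_comp_sub_const, ← mul_sub] at h
  exact h

theorem exists_norm_iteratedDeriv_scaledBump_le (n : ℕ) :
    ∃ C : ℝ, 0 ≤ C ∧ ∀ i ≤ n, ∀ a s y : ℝ, 0 < s → s ≤ 1 →
      ‖iteratedDeriv i (scaledBump a s) y‖ ≤ C * (s ^ n)⁻¹ := by
  obtain ⟨C, hC⟩ := hasCompactSupport_complexBump.exists_norm_iteratedDeriv_le (n := n)
    (contDiff_complexBump.of_le (mod_cast le_top))
  refine ⟨C, (norm_nonneg _).trans (hC 0 n.zero_le 0), fun i hi a s y hs hs1 => ?_⟩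
  rw [iteratedDeriv_scaledBump, norm_smul, norm_pow, norm_inv, Real.norm_of_nonneg hs.le,
    mul_comm, ← inv_pow]
  exact mul_le_mul (hC i hi _) (pow_le_pow_right₀ (one_le_inv₀ hs |>.2 hs1) hi) (by positivity)
    ((norm_nonneg _).trans (hC i hi 0))

def bumpNet (e : ℕ → ℝ) (x : ℝ → ℝ) (R : ℕ) (ε : ℝ) : ℝ → ℂ :=
  (range e).indicator (fun ε => scaledBump (x ε) (ε ^ R)) ε

theorem contDiff_bumpNet (e : ℕ → ℝ) (x : ℝ → ℝ) (R : ℕ) (ε : ℝ) :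
    ContDiff ℝ ∞ (bumpNet e x R ε) := by
  by_cases h : ε ∈ range e
  · simpa [bumpNet, h] using contDiff_scaledBump _ _
  · rw [bumpNet, indicator_of_notMem h]
    exact contDiff_zero_fun

theorem isModerate_bumpNet (e : ℕ → ℝ) (x : ℝ → ℝ) (R : ℕ) : IsModerate univ (bumpNet e x R) := by
  refine isModerate_univ_iff.2 ⟨fun ε _ => contDiff_bumpNet e x R ε, fun K _ n => ?_⟩
  obtain ⟨C, hC0, hC⟩ := exists_norm_iteratedDeriv_scaledBump_le n
  refine ⟨R * n, C, ?_⟩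
  filter_upwards [Ioc_mem_nhdsGT one_pos] with ε ⟨hε, hε1⟩ y _
  by_cases h : ε ∈ range e
  · simpa [bumpNet, h, pow_mul] using
      hC n le_rfl (x ε) (ε ^ R) y (pow_pos hε R) (pow_le_one₀ hε.le hε1)
  · rw [bumpNet, indicator_of_notMem h, Pi.zero_def, iteratedDeriv_const, ite_self, norm_zero]
    positivity

theorem not_isNegligible_bumpNet {K : Set ℝ} (hK : IsCompact K) {x : ℝ → ℝ}
    (hxK : ∀ ε ∈ Ioc (0 : ℝ) 1, x ε ∈ K) {e : ℕ → ℝ} (he : ∀ k, e k ∈ Ioc (0 : ℝ) 1)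
    (he0 : Tendsto e atTop (𝓝 0)) (R : ℕ) : ¬IsNegligible univ (bumpNet e x R) := by
  intro hneg
  obtain ⟨C, hC⟩ := (isNegligible_univ_iff.1 hneg).2 K hK 0 1
  have he' : Tendsto e atTop (𝓝[>] 0) :=
    tendsto_nhdsWithin_iff.2 ⟨he0, Eventually.of_forall fun k => (he k).1⟩
  obtain ⟨k, hCk, hCk1⟩ := (he'.eventually (hC.and (eventually_mul_lt_one C))).exists
  have h1 := hCk (x (e k)) (hxK _ (he k))
  rw [iteratedDeriv_zero, bumpNet, indicator_of_mem (mem_range_self k), scaledBump_self,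
    norm_one, pow_one] at h1
  linarith

theorem eventually_two_mul_pow_le_rpow_div {ρ : ℝ} {R : ℕ} (hR : ρ + 1 ≤ R) (n : ℕ) :
    ∀ᶠ ε in 𝓝[>] (0 : ℝ), 2 * ε ^ R ≤ ε ^ ρ / 2 ^ n := by
  filter_upwards [Ioc_mem_nhdsGT one_pos, eventually_mul_lt_one (2 ^ (n + 1))]
    with ε ⟨hε, hε1⟩ hεn
  calc 2 * ε ^ R ≤ 2 * (ε ^ ρ * ε) := by
        rw [← Real.rpow_natCast, ← Real.rpow_add_one hε.ne']
        gcongr 2 * ?_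
        exact Real.rpow_le_rpow_of_exponent_ge hε hε1 hR
    _ ≤ ε ^ ρ / 2 ^ n := by
        rw [le_div_iff₀ (by positivity)]
        calc 2 * (ε ^ ρ * ε) * 2 ^ n = ε ^ ρ * (2 ^ (n + 1) * ε) := by ring
          _ ≤ ε ^ ρ := mul_le_of_le_one_right (by positivity) hεn.le

theorem isNegligible_mul_bumpNet {f : ℝ → ℝ → ℂ} (hf : IsModerate univ f) {K : Set ℝ}
    (hK : IsCompact K) {x : ℝ → ℝ} (hxK : ∀ ε ∈ Ioc (0 : ℝ) 1, x ε ∈ K) {ρ : ℝ} (hρ : 0 ≤ ρ)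
    {e : ℕ → ℝ} (he : ∀ k, e k ∈ Ioc (0 : ℝ) 1)
    (hsmall : ∀ k : ℕ, ∀ y ∈ closedBall (x (e k)) (e k ^ ρ), ‖f (e k) y‖ < e k ^ k)
    {R : ℕ} (hR : ρ + 1 ≤ R) : IsNegligible univ fun ε y => f ε y * bumpNet e x R ε y := by
  obtain ⟨hsm, hmod⟩ := isModerate_univ_iff.1 hf
  refine isNegligible_univ_iff.2 ⟨fun ε hε => (hsm ε hε).mul (contDiff_bumpNet e x R ε),
    fun _ _ n m => ?_⟩
  obtain ⟨Cb, hCb0, hCb⟩ := exists_norm_iteratedDeriv_scaledBump_le n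
  obtain ⟨M, Cf, hCf0, hdecay⟩ := exists_eventually_norm_iteratedDeriv_le
    (eventually_contDiff_of_forall_Ioc hsm) (fun i => hmod _ (hK.cthickening (r := 1)) i) ρ n
    (m + R * n)
  -- only the finitely many `e k` with `k < M` fail to be flat enough
  have hlarge : ∀ᶠ ε in 𝓝[>] 0, ∀ k ∈ Finset.range M, ε < e k :=
    (Finset.range M).eventually_all.2 fun k _ =>
      mem_of_superset (Ioo_mem_nhdsGT (he k).1) fun _ h => h.2
  refine ⟨2 ^ n * (Cf * Cb), ?_⟩
  filter_upwards [hdecay, hlarge, eventually_two_mul_pow_le_rpow_div hR n,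
    Ioc_mem_nhdsGT one_pos] with ε hdε hlε hsε ⟨hε, hε1⟩ y _
  by_cases hr : ε ∈ range e
  · obtain ⟨k, rfl⟩ := hr
    have hkM : M ≤ k := by
      by_contra! h
      exact lt_irrefl _ (hlε k (Finset.mem_range.2 h))
    have hball : closedBall (x (e k)) (e k ^ ρ) ⊆ cthickening 1 K :=
      (closedBall_subset_closedBall (Real.rpow_le_one hε.le hε1 hρ)).trans
        (closedBall_subset_cthickening (hxK _ (he k)) 1)
    have hflat : ∀ z ∈ closedBall (x (e k)) (e k ^ ρ), ‖f (e k) z‖ ≤ e k ^ M := fun z hz =>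
      (hsmall k z hz).le.trans (pow_le_pow_of_le_one hε.le hε1 hkM)
    rw [bumpNet, indicator_of_mem (mem_range_self k)]
    refine (norm_iteratedDeriv_mul_le_of_tsupport_subset ((hsm _ (he k)).of_le (mod_cast le_top))
      ((contDiff_scaledBump _ _).of_le (mod_cast le_top)) (by positivity)
      ((tsupport_scaledBump _ (pow_pos hε R)).trans (closedBall_subset_closedBall hsε))
      (fun i hi z hz => hdε _ _ le_rfl hball hflat i hi z hz)
      (fun i hi z => hCb i hi _ _ z (pow_pos hε R) (pow_le_one₀ hε.le hε1)) y).trans_eq ?_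
    rw [← pow_mul, pow_add]
    field_simp
  · rw [bumpNet, indicator_of_notMem hr]
    simp only [Pi.zero_apply, mul_zero, iteratedDeriv_const, ite_self, norm_zero]
    positivity

theorem statement_19_general
    (f : ℝ → ℝ → ℂ)
    (hf : IsModerate (Set.univ : Set ℝ) f) :
    (∃ g : ℝ → ℝ → ℂ,
      IsModerate (Set.univ : Set ℝ) g ∧
      ¬ IsNegligible (Set.univ : Set ℝ) g ∧
      IsNegligible (Set.univ : Set ℝ) (fun ε x => f ε x * g ε x))
    ↔
    (∃ (K : Set ℝ), IsCompact K ∧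
      ∃ x : ℝ → ℝ, (∀ ε ∈ Set.Ioc (0:ℝ) 1, x ε ∈ K) ∧
      ∃ ρ : ℝ, 0 ≤ ρ ∧
      ∃ en : ℕ → ℝ, (∀ n : ℕ, en n ∈ Set.Ioc (0:ℝ) 1) ∧
        Filter.Tendsto en Filter.atTop (𝓝 0) ∧
        ∀ k : ℕ, ∀ y ∈ Set.Icc (x (en k) - en k ^ ρ) (x (en k) + en k ^ ρ),
          ‖f (en k) y‖ < en k ^ (k : ℕ)) := by
  constructor
  · rintro ⟨g, hg, hg', hfg⟩
    exact exists_flat_intervals_of_isNegligible_mul hg hg' hfg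
  · rintro ⟨K, hK, x, hxK, ρ, hρ, e, he, he0, hsmall⟩
    refine ⟨bumpNet e x (⌈ρ⌉₊ + 1), isModerate_bumpNet e x _,
      not_isNegligible_bumpNet hK hxK he he0 _,
      isNegligible_mul_bumpNet hf hK hxK hρ he (fun k y hy => hsmall k y ?_) ?_⟩
    · rwa [← Real.closedBall_eq_Icc]
    · push_cast
      linarith [Nat.le_ceil ρ]

/-- characterization of zero divisors in `G(ℝ)`: a nonzero `f` is a zero
divisor iff some compactly supported net of points carries intervals of radius `ε_k^ρ`
(along a zero sequence `ε_k`) on which `|f_{ε_k}| < ε_k^k`. -/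
theorem statement_19
    (f : ℝ → ℝ → ℂ)
    (hf : IsModerate (Set.univ : Set ℝ) f)
    (hne : ¬ IsNegligible (Set.univ : Set ℝ) f) :
    (∃ g : ℝ → ℝ → ℂ,
      IsModerate (Set.univ : Set ℝ) g ∧
      ¬ IsNegligible (Set.univ : Set ℝ) g ∧
      IsNegligible (Set.univ : Set ℝ) (fun ε x => f ε x * g ε x))
    ↔
    (∃ (K : Set ℝ), IsCompact K ∧
      ∃ x : ℝ → ℝ, (∀ ε ∈ Set.Ioc (0:ℝ) 1, x ε ∈ K) ∧
      ∃ ρ : ℝ, 0 ≤ ρ ∧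
      ∃ en : ℕ → ℝ, (∀ n : ℕ, en n ∈ Set.Ioc (0:ℝ) 1) ∧
        Filter.Tendsto en Filter.atTop (𝓝 0) ∧
        ∀ k : ℕ, ∀ y ∈ Set.Icc (x (en k) - en k ^ ρ) (x (en k) + en k ^ ρ),
          ‖f (en k) y‖ < en k ^ (k : ℕ)) :=
  statement_19_general f hf
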